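/- Let Z be a nonempty set and D the complete metric space of bounded functions Z → ℝ with the sup-norm distance. Fix ρ > 0 and τ > 0. Let Φ : D → D satisfy ‖Φ(V) − Φ(W)‖∞ ≤ e^{−ρτ} · ‖V − W‖∞ for all V, W ∈ D, with fixed point V⋆ = Φ(V⋆). Let H : D → D, p > 1, C_DP ≥ 0, γ > 0, C_H ≥ 0, and let F assign to each u ∈ (0,1] a map F(u) : D → D, such that: (i) ‖Φ(V) − (V + τ·H(V))‖∞ ≤ C_DP · τ^p for all V ∈ D; (ii) ‖F(u)(V) − H(V)‖∞ ≤ C_H · u^γ for all u ∈ (0,1] and V ∈ D; (iii) μ is a probability measure on (0,1] and, for each V ∈ D and z ∈ Z, the map u ↦ F(u)(V)(z) is measurable. Define T̃(V) := V + τ·( z ↦ ∫_{(0,1]} F(u)(V)(z) dμ(u) ) and iterates Ṽ_{k+1} := T̃(Ṽ_k) from any Ṽ_0 ∈ D. Then T̃ maps D to D, and for all k ≥ 0, ‖Ṽ_k − V⋆‖∞ ≤ e^{−ρτk} · ‖Ṽ_0 − V⋆‖∞ + ( C_DP·τ^p + τ·C_H·∫_{(0,1]} u^γ dμ(u) ) /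 ( 1 − e^{−ρτ} ). -/

import Mathlib

open MeasureTheory

/-- Sup-norm of a real-valued function. -/
noncomputable def supNorm {Z : Type*} (f : Z → ℝ) : ℝ := ⨆ z, |f z|

/-- A real-valued function is bounded. -/
def IsBdd {Z : Type*} (f : Z → ℝ) : Prop := ∃ C, ∀ z, |f z| ≤ C

/-!
Put `q = e^{-ρτ}` and `Ṽ_{k+1} = T̃ Ṽ_k`. Pointwise, `T̃ V - V⋆` splits as
`(T̃ V - Φ V) + (Φ V - Φ V⋆)`: the first term is the consistency error of the scheme, at most
`C_DP τ^p + τ C_H E[U^γ]` by (i) and by averaging (ii) over `μ`, and the second is at most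
`q ‖V - V⋆‖∞` by contractivity. So the errors obey `e_{k+1} ≤ q e_k + ε`, and unrolling this
affine recursion gives `e_k ≤ q^k e_0 + ε / (1 - q)`.
-/

lemma supNorm_le {Z : Type*} [Nonempty Z] {f : Z → ℝ} {C : ℝ} (h : ∀ z, |f z| ≤ C) :
    supNorm f ≤ C :=
  ciSup_le h

lemma IsBdd.of_abs_sub_le {Z : Type*} {f g : Z → ℝ} (hg : IsBdd g) {C : ℝ}
    (h : ∀ z, |f z - g z| ≤ C) : IsBdd f := by
  obtain ⟨Cg, hCg⟩ := hg
  refine ⟨C + Cg, fun z => ?_⟩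
  calc |f z| = |(f z - g z) + g z| := by rw [sub_add_cancel]
    _ ≤ |f z - g z| + |g z| := abs_add_le _ _
    _ ≤ C + Cg := add_le_add (h z) (hCg z)

lemma le_pow_mul_add_div_of_le_mul_add {a : ℕ → ℝ} {q ε : ℝ} (hq₀ : 0 ≤ q) (hq₁ : q < 1)
    (hε : 0 ≤ ε) (h : ∀ k, a (k + 1) ≤ q * a k + ε) (k : ℕ) :
    a k ≤ q ^ k * a 0 + ε / (1 - q) := by
  have h1q : 0 < 1 - q := sub_pos.mpr hq₁
  induction k with
  | zero => simpa using div_nonneg hε h1q.le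
  | succ k ih =>
    calc a (k + 1) ≤ q * (q ^ k * a 0 + ε / (1 - q)) + ε :=
          (h k).trans (by gcongr)
      _ = q ^ (k + 1) * a 0 + ε / (1 - q) := by field_simp; ring

lemma integrable_coe_rpow {μ : Measure (Set.Ioc (0 : ℝ) 1)} [IsFiniteMeasure μ] {γ : ℝ}
    (hγ : 0 ≤ γ) : Integrable (fun u : Set.Ioc (0 : ℝ) 1 => (u : ℝ) ^ γ) μ := by
  refine Integrable.of_bound (measurable_subtype_coe.pow_const γ).aestronglyMeasurable 1
    (ae_of_all _ fun u => ?_)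
  rw [Real.norm_of_nonneg (Real.rpow_nonneg u.2.1.le γ)]
  exact Real.rpow_le_one u.2.1.le u.2.2 hγ

section Averaging

variable {α : Type*} [MeasurableSpace α] {μ : Measure α} [IsProbabilityMeasure μ]

lemma abs_integral_sub_le_integral {f g : α → ℝ} {c : ℝ} (hf : AEStronglyMeasurable f μ)
    (hg : Integrable g μ) (hfg : ∀ u, |f u - c| ≤ g u) :
    |∫ u, f u ∂μ - c| ≤ ∫ u, g u ∂μ := by
  have hfc : Integrable (fun u => f u - c) μ :=
    hg.mono' (hf.sub aestronglyMeasurable_const) (ae_of_all _ hfg)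
  have hf_int : Integrable f μ :=
    (hfc.add (integrable_const c)).congr (ae_of_all _ fun u => sub_add_cancel (f u) c)
  calc |∫ u, f u ∂μ - c| = |∫ u, (f u - c) ∂μ| := by
        rw [integral_sub hf_int (integrable_const c), integral_const, probReal_univ, one_smul]
    _ ≤ ∫ u, |f u - c| ∂μ := abs_integral_le_integral_abs
    _ ≤ ∫ u, g u ∂μ := integral_mono hfc.abs hg hfg

lemma abs_add_mul_integral_sub_le {f g : α → ℝ} {x h φ w τ δ A : ℝ} (hτ : 0 ≤ τ)
    (hf : AEStronglyMeasurable f μ) (hg : Integrable g μ) (hfg : ∀ u, |f u - h| ≤ g u)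
    (hconsistent : |φ - (x + τ * h)| ≤ A) (hφw : |φ - w| ≤ δ) :
    |x + τ * ∫ u, f u ∂μ - w| ≤ δ + A + τ * ∫ u, g u ∂μ := by
  have havg : |τ * (∫ u, f u ∂μ - h)| ≤ τ * ∫ u, g u ∂μ := by
    rw [abs_mul, abs_of_nonneg hτ]
    exact mul_le_mul_of_nonneg_left (abs_integral_sub_le_integral hf hg hfg) hτ
  calc |x + τ * ∫ u, f u ∂μ - w|
        = |(φ - w) + ((x + τ * h) - φ) + τ * (∫ u, f u ∂μ - h)| := by ring_nf
    _ ≤ |φ - w| + |(x + τ * h) - φ| + |τ * (∫ u, f u ∂μ - h)| := abs_add_three _ _ _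
    _ ≤ δ + A + τ * ∫ u, g u ∂μ := by rw [abs_sub_comm (x + τ * h)]; gcongr

end Averaging

theorem stmt17_general {Z : Type*} [Nonempty Z]
    (ρ τ : ℝ) (hρ : 0 < ρ) (hτ : 0 < τ)
    (Φ : (Z → ℝ) → (Z → ℝ))
    (hΦcontr : ∀ V W : Z → ℝ, IsBdd V → IsBdd W → ∀ z : Z,
        |Φ V z - Φ W z| ≤ Real.exp (-(ρ * τ)) * supNorm (fun z => V z - W z))
    (Vstar : Z → ℝ) (hVstarb : IsBdd Vstar) (hfix : Φ Vstar = Vstar)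
    (H : (Z → ℝ) → (Z → ℝ))
    (p : ℝ) (C_DP : ℝ) (hCDP : 0 ≤ C_DP)
    (γ : ℝ) (hγ : 0 < γ) (C_H : ℝ) (hCH : 0 ≤ C_H)
    (F : Set.Ioc (0 : ℝ) 1 → (Z → ℝ) → (Z → ℝ))
    (hi : ∀ V : Z → ℝ, IsBdd V → ∀ z : Z,
        |Φ V z - (V z + τ * H V z)| ≤ C_DP * τ ^ p)
    (hii : ∀ (u : Set.Ioc (0 : ℝ) 1) (V : Z → ℝ), IsBdd V → ∀ z : Z,
        |F u V z - H V z| ≤ C_H * (u : ℝ) ^ γ)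
    (μ : Measure (Set.Ioc (0 : ℝ) 1)) [IsProbabilityMeasure μ]
    (hmeas : ∀ V : Z → ℝ, IsBdd V → ∀ z : Z,
        Measurable (fun u : Set.Ioc (0 : ℝ) 1 => F u V z))
    (Vt : ℕ → Z → ℝ) (hVt0 : IsBdd (Vt 0))
    (hVt : ∀ (k : ℕ) (z : Z),
        Vt (k + 1) z = Vt k z + τ * ∫ u, F u (Vt k) z ∂μ) :
    (∀ V : Z → ℝ, IsBdd V → IsBdd (fun z => V z + τ * ∫ u, F u V z ∂μ)) ∧
    ∀ k : ℕ, supNorm (fun z => Vt k z - Vstar z)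
      ≤ Real.exp (-(ρ * τ * k)) * supNorm (fun z => Vt 0 z - Vstar z)
        + (C_DP * τ ^ p + τ * C_H * ∫ u : Set.Ioc (0 : ℝ) 1, (u : ℝ) ^ γ ∂μ)
          / (1 - Real.exp (-(ρ * τ))) := by
  set q := Real.exp (-(ρ * τ))
  set ε := C_DP * τ ^ p + τ * C_H * ∫ u : Set.Ioc (0 : ℝ) 1, (u : ℝ) ^ γ ∂μ
  have hq : q < 1 := Real.exp_lt_one_iff.mpr (neg_lt_zero.mpr (mul_pos hρ hτ))
  have hε : 0 ≤ ε := by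
    have : 0 ≤ ∫ u : Set.Ioc (0 : ℝ) 1, (u : ℝ) ^ γ ∂μ :=
      integral_nonneg fun u => Real.rpow_nonneg u.2.1.le γ
    positivity
  have step : ∀ V, IsBdd V → ∀ z,
      |V z + τ * ∫ u, F u V z ∂μ - Vstar z| ≤ q * supNorm (fun z => V z - Vstar z) + ε := by
    intro V hV z
    refine (abs_add_mul_integral_sub_le hτ.le (hmeas V hV z).aestronglyMeasurable
      ((integrable_coe_rpow hγ.le).const_mul C_H) (hii · V hV z) (hi V hV z)
      (by simpa [hfix] using hΦcontr V Vstar hV hVstarb z)).trans_eq ?_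
    rw [integral_const_mul]
    ring
  have hT : ∀ V, IsBdd V → IsBdd (fun z => V z + τ * ∫ u, F u V z ∂μ) :=
    fun V hV => hVstarb.of_abs_sub_le (step V hV)
  have hVtb : ∀ k, IsBdd (Vt k) := by
    intro k
    induction k with
    | zero => exact hVt0
    | succ k ih => simpa only [← funext (hVt k)] using hT _ ih
  refine ⟨hT, fun k => ?_⟩
  have hexp : Real.exp (-(ρ * τ * k)) = q ^ k := by
    rw [← Real.exp_nat_mul]
    ring_nf
  rw [hexp]
  exact le_pow_mul_add_div_of_le_mul_add (a := fun k => supNorm fun z => Vt k z - Vstar z)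
    (Real.exp_pos _).le hq hε (fun k => supNorm_le fun z => by rw [hVt]; exact step _ (hVtb k) z) k

theorem stmt17 {Z : Type*} [Nonempty Z]
    (ρ τ : ℝ) (hρ : 0 < ρ) (hτ : 0 < τ)
    (Φ : (Z → ℝ) → (Z → ℝ))
    (hΦmap : ∀ V : Z → ℝ, IsBdd V → IsBdd (Φ V))
    (hΦcontr : ∀ V W : Z → ℝ, IsBdd V → IsBdd W → ∀ z : Z,
        |Φ V z - Φ W z| ≤ Real.exp (-(ρ * τ)) * supNorm (fun z => V z - W z))
    (Vstar : Z → ℝ) (hVstarb : IsBdd Vstar) (hfix : Φ Vstar = Vstar)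
    (H : (Z → ℝ) → (Z → ℝ)) (hHmap : ∀ V : Z → ℝ, IsBdd V → IsBdd (H V))
    (p : ℝ) (hp : 1 < p) (C_DP : ℝ) (hCDP : 0 ≤ C_DP)
    (γ : ℝ) (hγ : 0 < γ) (C_H : ℝ) (hCH : 0 ≤ C_H)
    (F : Set.Ioc (0 : ℝ) 1 → (Z → ℝ) → (Z → ℝ))
    (hFmap : ∀ (u : Set.Ioc (0 : ℝ) 1) (V : Z → ℝ), IsBdd V → IsBdd (F u V))
    (hi : ∀ V : Z → ℝ, IsBdd V → ∀ z : Z,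
        |Φ V z - (V z + τ * H V z)| ≤ C_DP * τ ^ p)
    (hii : ∀ (u : Set.Ioc (0 : ℝ) 1) (V : Z → ℝ), IsBdd V → ∀ z : Z,
        |F u V z - H V z| ≤ C_H * (u : ℝ) ^ γ)
    (μ : Measure (Set.Ioc (0 : ℝ) 1)) [IsProbabilityMeasure μ]
    (hmeas : ∀ V : Z → ℝ, IsBdd V → ∀ z : Z,
        Measurable (fun u : Set.Ioc (0 : ℝ) 1 => F u V z))
    (Vt : ℕ → Z → ℝ) (hVt0 : IsBdd (Vt 0))
    (hVt : ∀ (k : ℕ) (z : Z),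
        Vt (k + 1) z = Vt k z + τ * ∫ u, F u (Vt k) z ∂μ) :
    (∀ V : Z → ℝ, IsBdd V → IsBdd (fun z => V z + τ * ∫ u, F u V z ∂μ)) ∧
    ∀ k : ℕ, supNorm (fun z => Vt k z - Vstar z)
      ≤ Real.exp (-(ρ * τ * k)) * supNorm (fun z => Vt 0 z - Vstar z)
        + (C_DP * τ ^ p + τ * C_H * ∫ u : Set.Ioc (0 : ℝ) 1, (u : ℝ) ^ γ ∂μ)
          / (1 - Real.exp (-(ρ * τ))) :=
  stmt17_general ρ τ hρ hτ Φ hΦcontr Vstar hVstarb hfix H p C_DP hCDP γ hγ C_H hCH F hi hii μ hmeas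
    Vt hVt0 hVt
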